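/- (Higher characteristics of manifolds) If M is a d-manifold without boundary (every unit sphere is a (d-1)-sphere), then for every m ≥ 1, w_m(M) = w_1(M); in particular, if d is odd then w_m(M) = 0 for all m ≥ 1. -/
import Mathlib


open Finset

variable {α : Type*} [DecidableEq α]

/-- The star `U(x) = {y ∈ G : x ⊆ y}` of a simplex `x` in the complex `G`. -/
def starC (G : Finset (Finset α)) (x : Finset α) : Finset (Finset α) :=
  G.filter (fun y => x ⊆ y)

/-- The unit ball `B(x)`: the closure of the star `U(x)`. -/
def ballC (G : Finset (Finset α)) (x : Finset α) : Finset (Finset α) :=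
  G.filter (fun z => ∃ y ∈ G, x ⊆ y ∧ z ⊆ y)

/-- The unit sphere `S(x) = B(x) \ U(x)`. -/
def sphereC (G : Finset (Finset α)) (x : Finset α) : Finset (Finset α) :=
  ballC G x \ starC G x

/-- `G` is a finite abstract simplicial complex: a finite set of nonempty finite sets
closed under taking nonempty subsets. -/
def IsComplex (G : Finset (Finset α)) : Prop :=
  (∀ x ∈ G, x.Nonempty) ∧ ∀ x ∈ G, ∀ y, y ⊆ x → y.Nonempty → y ∈ G

/-- The intersection `x_1 ∩ ... ∩ x_m` of a tuple of finite sets (for `m ≥ 1`). -/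
def interTuple {m : ℕ} (X : Fin m → Finset α) : Finset α :=
  (Finset.univ.sup X).filter (fun v => ∀ j, v ∈ X j)

/-- The `m`-th characteristic `w_m(A)`. -/
def wm (m : ℕ) (A : Finset (Finset α)) : ℤ :=
  ∑ X ∈ Fintype.piFinset (fun _ : Fin m => A),
    if interTuple X ∈ A then ∏ j, (-1 : ℤ) ^ ((X j).card - 1) else 0

/-- `U` is open in the star topology on `G`: a union of stars. -/
def SCOpen (G U : Finset (Finset α)) : Prop :=
  ∃ T ⊆ G, U = T.biUnion (fun x => starC G x)

/-- Contractibility, defined recursively: a one-point complex is contractible, and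
`G` is contractible if there is a vertex `x ∈ G` such that the unit sphere `S(x)`
and `G` minus the star `U(x)` are both contractible. -/
inductive Contractible : Finset (Finset ℕ) → Prop where
  | point (v : ℕ) : Contractible {{v}}
  | step (G : Finset (Finset ℕ)) (x : Finset ℕ) (hx : x ∈ G) (hv : x.card = 1)
      (hS : Contractible (sphereC G x)) (hU : Contractible (G \ starC G x)) :
      Contractible G

/-- `d`-spheres, defined recursively: the empty complex is the `(-1)`-sphere; a
nonempty complex `G` is a `d`-sphere if every vertex unit sphere is a
`(d-1)`-sphere (so `G` is a `d`-manifold) and removing some open star leaves a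
contractible complex. -/
inductive IsSphere : ℤ → Finset (Finset ℕ) → Prop where
  | empty : IsSphere (-1) (∅ : Finset (Finset ℕ))
  | succ (d : ℤ) (G : Finset (Finset ℕ)) (hne : G.Nonempty)
      (hmani : ∀ x ∈ G, x.card = 1 → IsSphere (d - 1) (sphereC G x))
      (hcon : ∃ x ∈ G, x.card = 1 ∧ Contractible (G \ starC G x)) :
      IsSphere d G

/-- Higher characteristics of manifolds: if `M` is a `d`-manifold without boundary
(every vertex unit sphere is a `(d-1)`-sphere), then `w_m(M) = w_1(M)` for all
`m ≥ 1`; in particular `w_m(M) = 0` for all `m ≥ 1` when `d` is odd. -/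


def chi (A : Finset (Finset α)) : ℤ := ∑ y ∈ A, (-1 : ℤ) ^ (y.card - 1)

lemma neg_pow_pred {n : ℕ} (h : 1 ≤ n) : (-1 : ℤ) ^ (n - 1) = -(-1 : ℤ) ^ n := by
  obtain ⟨k, rfl⟩ := Nat.exists_eq_add_of_le h
  rw [add_comm]
  simp [pow_succ, pow_add]

lemma mem_starC {G : Finset (Finset α)} {x y : Finset α} :
    y ∈ starC G x ↔ y ∈ G ∧ x ⊆ y := by simp [starC]

lemma mem_ballC {G : Finset (Finset α)} {x z : Finset α} :
    z ∈ ballC G x ↔ z ∈ G ∧ ∃ y ∈ G, x ⊆ y ∧ z ⊆ y := by simp [ballC]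

lemma mem_sphereC {G : Finset (Finset α)} {x z : Finset α} :
    z ∈ sphereC G x ↔ z ∈ ballC G x ∧ ¬ (z ∈ G ∧ x ⊆ z) := by
  simp [sphereC, mem_starC]

lemma starC_subset_ballC {G : Finset (Finset α)} {x : Finset α} :
    starC G x ⊆ ballC G x := by
  intro y hy
  rw [mem_starC] at hy
  exact mem_ballC.2 ⟨hy.1, y, hy.1, hy.2, Finset.Subset.refl y⟩

lemma isComplex_sphereC {G : Finset (Finset α)} (hG : IsComplex G) (x : Finset α) :
    IsComplex (sphereC G x) := by
  constructor
  · intro z hz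
    exact hG.1 z ((mem_ballC.1 (mem_sphereC.1 hz).1).1)
  · intro z hz w hw hwne
    rw [mem_sphereC] at hz ⊢
    obtain ⟨hzG, y, hyG, hxy, hzy⟩ := mem_ballC.1 hz.1
    refine ⟨mem_ballC.2 ⟨hG.2 z hzG w hw hwne, y, hyG, hxy, hw.trans hzy⟩, fun hc => hz.2 ?_⟩
    exact ⟨hzG, hc.2.trans hw⟩

lemma isComplex_sdiff_starC {G : Finset (Finset α)} (hG : IsComplex G) (x : Finset α) :
    IsComplex (G \ starC G x) := by
  constructor
  · intro z hz; exact hG.1 z (Finset.mem_sdiff.1 hz).1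
  · intro z hz w hw hwne
    rw [Finset.mem_sdiff] at hz ⊢
    refine ⟨hG.2 z hz.1 w hw hwne, fun hws => hz.2 ?_⟩
    rw [mem_starC] at hws ⊢
    exact ⟨hz.1, hws.2.trans hw⟩

lemma chi_ballC {G : Finset (Finset α)} (hG : IsComplex G) {x : Finset α} (hx : x ∈ G) :
    chi (ballC G x) = 1 := by
  obtain ⟨v, hv⟩ := hG.1 x hx
  set B := ballC G x with hB
  have hvB : ({v} : Finset α) ∈ B := by
    refine mem_ballC.2 ⟨hG.2 x hx {v} (Finset.singleton_subset_iff.2 hv) ⟨v, Finset.mem_singleton_self v⟩,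
      x, hx, Finset.Subset.refl x, Finset.singleton_subset_iff.2 hv⟩
  have hsplit := Finset.sum_filter_add_sum_filter_not B (fun z => v ∈ z)
    (fun z => (-1 : ℤ) ^ (z.card - 1))
  have h1 : B.filter (fun z => v ∈ z) = insert {v} (B.filter (fun z => v ∈ z ∧ z ≠ {v})) := by
    ext z
    simp only [Finset.mem_filter, Finset.mem_insert]
    constructor
    · rintro ⟨hzB, hvz⟩
      by_cases hz : z = {v}
      · exact Or.inl hz
      · exact Or.inr ⟨hzB, hvz, hz⟩
    · rintro (rfl | ⟨hzB, hvz, _⟩)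
      · exact ⟨hvB, Finset.mem_singleton_self v⟩
      · exact ⟨hzB, hvz⟩
  have hnotmem : ({v} : Finset α) ∉ B.filter (fun z => v ∈ z ∧ z ≠ {v}) := by
    simp
  have h2 : ∑ z ∈ B.filter (fun z => ¬ v ∈ z), (-1 : ℤ) ^ (z.card - 1)
      = ∑ z ∈ B.filter (fun z => v ∈ z ∧ z ≠ {v}), (-(-1 : ℤ) ^ (z.card - 1)) := by
    refine Finset.sum_nbij' (fun z => insert v z) (fun z => z.erase v) ?_ ?_ ?_ ?_ ?_
    · intro z hz
      rw [Finset.mem_filter] at hz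
      obtain ⟨hzB, hvz⟩ := hz
      obtain ⟨hzG, y, hyG, hxy, hzy⟩ := mem_ballC.1 hzB
      have hvy : v ∈ y := hxy hv
      have hins : insert v z ⊆ y := Finset.insert_subset hvy hzy
      refine Finset.mem_filter.2 ⟨mem_ballC.2 ⟨hG.2 y hyG _ hins ⟨v, Finset.mem_insert_self v z⟩,
        y, hyG, hxy, hins⟩, Finset.mem_insert_self v z, fun hc => ?_⟩
      obtain ⟨u, hu⟩ := hG.1 z hzG
      have : u ∈ ({v} : Finset α) := hc ▸ Finset.mem_insert_of_mem hu
      rw [Finset.mem_singleton] at this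
      exact hvz (this ▸ hu)
    · intro z hz
      rw [Finset.mem_filter] at hz
      obtain ⟨hzB, hvz, hzne⟩ := hz
      obtain ⟨hzG, y, hyG, hxy, hzy⟩ := mem_ballC.1 hzB
      have hne : (z.erase v).Nonempty := by
        rw [← Finset.card_pos, Finset.card_erase_of_mem hvz]
        have h2le : 2 ≤ z.card := by
          refine Finset.one_lt_card.2 ?_
          obtain ⟨u, hu, hune⟩ : ∃ u ∈ z, u ≠ v := by
            by_contra hcon
            push_neg at hcon
            exact hzne (Finset.eq_singleton_iff_unique_mem.2 ⟨hvz, hcon⟩)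
          exact ⟨u, hu, v, hvz, hune⟩
        omega
      refine Finset.mem_filter.2 ⟨mem_ballC.2 ⟨hG.2 z hzG _ (Finset.erase_subset v z) hne,
        y, hyG, hxy, (Finset.erase_subset v z).trans hzy⟩, Finset.notMem_erase v z⟩
    · intro z hz
      rw [Finset.mem_filter] at hz
      exact Finset.erase_insert hz.2
    · intro z hz
      rw [Finset.mem_filter] at hz
      exact Finset.insert_erase hz.2.1
    · intro z hz
      rw [Finset.mem_filter] at hz
      have hzne : z.Nonempty := hG.1 z (mem_ballC.1 hz.1).1
      have hc : (insert v z).card = z.card + 1 := Finset.card_insert_of_notMem hz.2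
      rw [hc]
      have h1le : 1 ≤ z.card := Finset.card_pos.2 hzne
      rw [show z.card + 1 - 1 = z.card by omega, neg_pow_pred h1le]
  have h3 : ∑ z ∈ B.filter (fun z => v ∈ z), (-1 : ℤ) ^ (z.card - 1)
      = 1 + ∑ z ∈ B.filter (fun z => v ∈ z ∧ z ≠ {v}), (-1 : ℤ) ^ (z.card - 1) := by
    rw [h1, Finset.sum_insert hnotmem]
    simp
  unfold chi
  rw [← hsplit, h3, h2]
  simp [Finset.sum_neg_distrib]

lemma chi_sphereC_add_chi_starC {G : Finset (Finset α)} (hG : IsComplex G) {x : Finset α}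
    (hx : x ∈ G) : chi (sphereC G x) + chi (starC G x) = 1 := by
  have := Finset.sum_sdiff (f := fun z : Finset α => (-1 : ℤ) ^ (z.card - 1))
    (starC_subset_ballC (G := G) (x := x))
  unfold chi sphereC
  rw [this]
  exact chi_ballC hG hx

lemma chi_sdiff_add {G U : Finset (Finset α)} (h : U ⊆ G) :
    chi (G \ U) + chi U = chi G :=
  Finset.sum_sdiff h

lemma chi_contractible {G : Finset (Finset ℕ)} (h : Contractible G) (hG : IsComplex G) :
    chi G = 1 := by
  induction h with
  | point v => simp [chi]
  | step G x hx hv hS hU ihS ihU =>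
    have h1 := chi_sphereC_add_chi_starC hG hx
    have h2 : chi (G \ starC G x) + chi (starC G x) = chi G :=
      chi_sdiff_add (Finset.filter_subset _ _)
    have h3 := ihS (isComplex_sphereC hG x)
    have h4 := ihU (isComplex_sdiff_starC hG x)
    linarith

def eps (d : ℤ) : ℤ := if Even d then 1 else -1

lemma eps_sub_one (d : ℤ) : eps (d - 1) = -eps d := by
  by_cases h : Even d <;> simp [eps, Int.even_sub_one, h]

lemma chi_isSphere {d : ℤ} {G : Finset (Finset ℕ)} (h : IsSphere d G) (hG : IsComplex G) :
    chi G = 1 + eps d := by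
  induction h with
  | empty =>
    have : ¬ Even (-1 : ℤ) := by decide
    simp [chi, eps, this]
  | succ d G hne hmani hcon ih =>
    obtain ⟨x, hx, hcard, hcontr⟩ := hcon
    have h1 := chi_sphereC_add_chi_starC hG hx
    have h2 : chi (G \ starC G x) + chi (starC G x) = chi G :=
      chi_sdiff_add (Finset.filter_subset _ _)
    have h3 := ih x hx hcard (isComplex_sphereC hG x)
    have h4 := chi_contractible hcontr (isComplex_sdiff_starC hG x)
    have h5 := eps_sub_one d
    linarith

lemma isSphere_mani {d : ℤ} {G : Finset (Finset ℕ)} (h : IsSphere d G) (hne : G.Nonempty) :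
    ∀ w ∈ G, w.card = 1 → IsSphere (d - 1) (sphereC G w) := by
  cases h with
  | empty => exact absurd hne (by simp)
  | succ _ _ hne' hmani hcon => exact hmani

lemma chi_starC_manifold :
    ∀ (n : ℕ) (d : ℤ) (G : Finset (Finset ℕ)), IsComplex G →
      (∀ v ∈ G, v.card = 1 → IsSphere (d - 1) (sphereC G v)) →
      ∀ x ∈ G, x.card = n + 1 → chi (starC G x) = eps d := by
  intro n
  induction n with
  | zero =>
    intro d G hG hm x hx hcard
    have hsph := hm x hx hcard
    have h1 := chi_sphereC_add_chi_starC hG hx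
    have h3 := chi_isSphere hsph (isComplex_sphereC hG x)
    have h5 := eps_sub_one d
    linarith
  | succ n ih =>
    intro d G hG hm x hx hcard
    have hxne : x.Nonempty := hG.1 x hx
    obtain ⟨v, hvx⟩ := hxne
    have hvG : ({v} : Finset ℕ) ∈ G :=
      hG.2 x hx {v} (Finset.singleton_subset_iff.2 hvx) ⟨v, Finset.mem_singleton_self v⟩
    set S := sphereC G {v} with hSdef
    have hSsph : IsSphere (d - 1) S := hm {v} hvG rfl
    have hSC : IsComplex S := isComplex_sphereC hG {v}
    set x' := x.erase v with hx'def
    have hx'card : x'.card = n + 1 := by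
      rw [hx'def, Finset.card_erase_of_mem hvx, hcard]
      omega
    have hx'ne : x'.Nonempty := by rw [← Finset.card_pos, hx'card]; omega
    have hx'G : x' ∈ G := hG.2 x hx x' (Finset.erase_subset v x) hx'ne
    have hx'S : x' ∈ S := by
      rw [hSdef, mem_sphereC]
      refine ⟨mem_ballC.2 ⟨hx'G, x, hx, Finset.singleton_subset_iff.2 hvx,
        Finset.erase_subset v x⟩, fun hc => ?_⟩
      have : v ∈ x' := hc.2 (Finset.mem_singleton_self v)
      exact Finset.notMem_erase v x this
    have hm' : ∀ w ∈ S, w.card = 1 → IsSphere (d - 1 - 1) (sphereC S w) :=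
      isSphere_mani hSsph ⟨x', hx'S⟩
    have ihS := ih (d - 1) S hSC hm' x' hx'S hx'card
    -- chi (starC G x) = - chi (starC S x')
    have hbij : chi (starC G x) = ∑ z ∈ starC S x', (-(-1 : ℤ) ^ (z.card - 1)) := by
      unfold chi
      refine Finset.sum_nbij' (fun y => y.erase v) (fun z => insert v z) ?_ ?_ ?_ ?_ ?_
      · intro y hy
        rw [mem_starC] at hy
        obtain ⟨hyG, hxy⟩ := hy
        have hvy : v ∈ y := hxy hvx
        have hsub : x' ⊆ y.erase v := by
          intro u hu
          exact Finset.mem_erase.2 ⟨(Finset.mem_erase.1 hu).1, hxy (Finset.erase_subset v x hu)⟩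
        have hne : (y.erase v).Nonempty := hx'ne.mono hsub
        refine mem_starC.2 ⟨?_, hsub⟩
        rw [hSdef, mem_sphereC]
        refine ⟨mem_ballC.2 ⟨hG.2 y hyG _ (Finset.erase_subset v y) hne, y, hyG,
          Finset.singleton_subset_iff.2 hvy, Finset.erase_subset v y⟩, fun hc => ?_⟩
        exact Finset.notMem_erase v y (hc.2 (Finset.mem_singleton_self v))
      · intro z hz
        rw [mem_starC] at hz
        obtain ⟨hzS, hx'z⟩ := hz
        rw [hSdef, mem_sphereC] at hzS
        obtain ⟨hzB, hzn⟩ := hzS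
        obtain ⟨hzG, y, hyG, hvy, hzy⟩ := mem_ballC.1 hzB
        have hins : insert v z ⊆ y := Finset.insert_subset (hvy (Finset.mem_singleton_self v)) hzy
        refine mem_starC.2 ⟨hG.2 y hyG _ hins ⟨v, Finset.mem_insert_self v z⟩, ?_⟩
        intro u hu
        by_cases huv : u = v
        · exact huv ▸ Finset.mem_insert_self v z
        · exact Finset.mem_insert_of_mem (hx'z (Finset.mem_erase.2 ⟨huv, hu⟩))
      · intro y hy
        rw [mem_starC] at hy
        exact Finset.insert_erase (hy.2 hvx)
      · intro z hz
        rw [mem_starC] at hz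
        have hvz : v ∉ z := by
          have := (mem_sphereC.1 (hSdef ▸ hz.1)).2
          intro hc
          exact this ⟨(mem_ballC.1 (mem_sphereC.1 (hSdef ▸ hz.1)).1).1,
            Finset.singleton_subset_iff.2 hc⟩
        exact Finset.erase_insert hvz
      · intro y hy
        rw [mem_starC] at hy
        have hvy : v ∈ y := hy.2 hvx
        have hyc : 2 ≤ y.card := by
          have := Finset.card_le_card hy.2
          omega
        rw [Finset.card_erase_of_mem hvy, neg_pow_pred (n := y.card - 1) (by omega), neg_neg]
    rw [hbij, Finset.sum_neg_distrib]
    show -chi (starC S x') = eps d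
    rw [ihS, eps_sub_one, neg_neg]

lemma interTuple_subset {m : ℕ} (X : Fin m → Finset α) (j : Fin m) :
    interTuple X ⊆ X j := by
  intro v hv
  exact (Finset.mem_filter.1 hv).2 j

lemma subset_interTuple {m : ℕ} (hm : 0 < m) {X : Fin m → Finset α} {x : Finset α}
    (h : ∀ j, x ⊆ X j) : x ⊆ interTuple X := by
  intro v hv
  refine Finset.mem_filter.2 ⟨?_, fun j => h j hv⟩
  exact Finset.mem_sup.2 ⟨⟨0, hm⟩, Finset.mem_univ _, h ⟨0, hm⟩ hv⟩

lemma interTuple_mem_starC {G : Finset (Finset α)} (hG : IsComplex G) {x : Finset α}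
    (hx : x ∈ G) {m : ℕ} (hm : 0 < m) {X : Fin m → Finset α}
    (hX : ∀ j, X j ∈ starC G x) : interTuple X ∈ starC G x := by
  have hxs : x ⊆ interTuple X := subset_interTuple hm (fun j => (mem_starC.1 (hX j)).2)
  have hne : (interTuple X).Nonempty := (hG.1 x hx).mono hxs
  have hj0 := hX ⟨0, hm⟩
  exact mem_starC.2 ⟨hG.2 (X ⟨0, hm⟩) (mem_starC.1 hj0).1 _ (interTuple_subset X ⟨0, hm⟩) hne, hxs⟩

lemma wm_starC {G : Finset (Finset α)} (hG : IsComplex G) {x : Finset α} (hx : x ∈ G)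
    {m : ℕ} (hm : 0 < m) : wm m (starC G x) = (chi (starC G x)) ^ m := by
  unfold wm
  rw [Finset.sum_congr rfl (fun X hX => if_pos (interTuple_mem_starC hG hx hm
    (fun j => Fintype.mem_piFinset.1 hX j)))]
  rw [Finset.sum_prod_piFinset (starC G x) (fun (_ : Fin m) (y : Finset α) => (-1 : ℤ) ^ (y.card - 1))]
  simp [chi, Finset.prod_const]

lemma sum_powerset_nonempty {s : Finset α} (hs : s.Nonempty) :
    ∑ x ∈ s.powerset.filter Finset.Nonempty, (-1 : ℤ) ^ (x.card - 1) = 1 := by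
  have h0 := Finset.sum_powerset_neg_one_pow_card_of_nonempty hs
  have hsplit := Finset.sum_filter_add_sum_filter_not s.powerset Finset.Nonempty
    (fun z : Finset α => (-1 : ℤ) ^ z.card)
  have hempty : s.powerset.filter (fun z => ¬ z.Nonempty) = {∅} := by
    ext z
    simp [Finset.not_nonempty_iff_eq_empty]
    rintro rfl
    exact Finset.empty_subset s
  rw [hempty] at hsplit
  simp only [Finset.sum_singleton, Finset.card_empty, pow_zero] at hsplit
  have h1 : ∑ z ∈ s.powerset.filter Finset.Nonempty, (-1 : ℤ) ^ z.card = -1 := by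
    rw [h0] at hsplit; linarith
  have h2 : ∀ z ∈ s.powerset.filter Finset.Nonempty,
      (-1 : ℤ) ^ (z.card - 1) = -(-1 : ℤ) ^ z.card := by
    intro z hz
    exact neg_pow_pred (Finset.card_pos.2 (Finset.mem_filter.1 hz).2)
  rw [Finset.sum_congr rfl h2, Finset.sum_neg_distrib, h1, neg_neg]

lemma innerSumKey {G : Finset (Finset α)} (hG : IsComplex G) {m : ℕ} (hm : 0 < m)
    {X : Fin m → Finset α} (hX : ∀ j, X j ∈ G) :
    ∑ x ∈ G.filter (fun x => ∀ j, x ⊆ X j), (-1 : ℤ) ^ (x.card - 1)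
      = if interTuple X ∈ G then 1 else 0 := by
  set s := interTuple X with hs
  have hj0 : s ⊆ X ⟨0, hm⟩ := interTuple_subset X ⟨0, hm⟩
  have hfilter : G.filter (fun x => ∀ j, x ⊆ X j) = s.powerset.filter Finset.Nonempty := by
    ext x
    simp only [Finset.mem_filter, Finset.mem_powerset]
    constructor
    · rintro ⟨hxG, hsub⟩
      exact ⟨subset_interTuple hm hsub, hG.1 x hxG⟩
    · rintro ⟨hxs, hxne⟩
      exact ⟨hG.2 (X ⟨0, hm⟩) (hX ⟨0, hm⟩) x (hxs.trans hj0) hxne,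
        fun j => hxs.trans (interTuple_subset X j)⟩
  rw [hfilter]
  by_cases hne : s.Nonempty
  · rw [if_pos (hG.2 (X ⟨0, hm⟩) (hX ⟨0, hm⟩) s hj0 hne), sum_powerset_nonempty hne]
  · rw [Finset.not_nonempty_iff_eq_empty] at hne
    rw [if_neg (fun hc => by simpa [hne] using hG.1 s hc), hne]
    rw [Finset.powerset_empty, Finset.filter_singleton]
    simp

lemma gauss_bonnet {G : Finset (Finset α)} (hG : IsComplex G) {m : ℕ} (hm : 0 < m) :
    wm m G = ∑ x ∈ G, (-1 : ℤ) ^ (x.card - 1) * wm m (starC G x) := by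
  have hstar : ∀ x ∈ G, wm m (starC G x)
      = ∑ X ∈ Fintype.piFinset (fun _ : Fin m => G),
          (if ∀ j, x ⊆ X j then ∏ j, (-1 : ℤ) ^ ((X j).card - 1) else 0) := by
    intro x hx
    unfold wm
    rw [Finset.sum_congr rfl (fun X hX => if_pos (interTuple_mem_starC hG hx hm
      (fun j => Fintype.mem_piFinset.1 hX j)))]
    have hsub : Fintype.piFinset (fun _ : Fin m => starC G x)
        ⊆ Fintype.piFinset (fun _ : Fin m => G) :=
      Fintype.piFinset_subset _ _ (fun _ => Finset.filter_subset _ G)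
    have h1 : ∑ X ∈ Fintype.piFinset (fun _ : Fin m => starC G x),
          (if ∀ j, x ⊆ X j then ∏ j, (-1 : ℤ) ^ ((X j).card - 1) else 0)
        = ∑ X ∈ Fintype.piFinset (fun _ : Fin m => G),
          (if ∀ j, x ⊆ X j then ∏ j, (-1 : ℤ) ^ ((X j).card - 1) else 0) := by
      refine Finset.sum_subset hsub ?_
      intro X hXG hXs
      rw [if_neg]
      intro hc
      exact hXs (Fintype.mem_piFinset.2
        (fun j => mem_starC.2 ⟨Fintype.mem_piFinset.1 hXG j, hc j⟩))
    rw [← h1]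
    exact Finset.sum_congr rfl (fun X hX =>
      (if_pos (fun j => (mem_starC.1 (Fintype.mem_piFinset.1 hX j)).2)).symm)
  calc wm m G
      = ∑ X ∈ Fintype.piFinset (fun _ : Fin m => G),
          (if interTuple X ∈ G then 1 else 0) * ∏ j, (-1 : ℤ) ^ ((X j).card - 1) := by
        unfold wm
        refine Finset.sum_congr rfl (fun X hX => ?_)
        by_cases h : interTuple X ∈ G <;> simp [h]
    _ = ∑ X ∈ Fintype.piFinset (fun _ : Fin m => G),
          (∑ x ∈ G.filter (fun x => ∀ j, x ⊆ X j), (-1 : ℤ) ^ (x.card - 1))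
            * ∏ j, (-1 : ℤ) ^ ((X j).card - 1) := by
        refine Finset.sum_congr rfl (fun X hX => ?_)
        rw [innerSumKey hG hm (fun j => Fintype.mem_piFinset.1 hX j)]
    _ = ∑ X ∈ Fintype.piFinset (fun _ : Fin m => G), ∑ x ∈ G,
          (if ∀ j, x ⊆ X j then (-1 : ℤ) ^ (x.card - 1) * ∏ j, (-1 : ℤ) ^ ((X j).card - 1)
            else 0) := by
        refine Finset.sum_congr rfl (fun X hX => ?_)
        rw [Finset.sum_mul, Finset.sum_filter]
    _ = ∑ x ∈ G, (-1 : ℤ) ^ (x.card - 1) * wm m (starC G x) := by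
        rw [Finset.sum_comm]
        refine Finset.sum_congr rfl (fun x hx => ?_)
        rw [hstar x hx, Finset.mul_sum]
        refine Finset.sum_congr rfl (fun X hX => ?_)
        by_cases h : ∀ j, x ⊆ X j <;> simp [h]

lemma interTuple_one (X : Fin 1 → Finset α) : interTuple X = X 0 := by
  apply Finset.Subset.antisymm (interTuple_subset X 0)
  refine subset_interTuple Nat.one_pos (fun j => ?_)
  have : j = 0 := Subsingleton.elim j 0
  rw [this]

lemma wm_one (G : Finset (Finset α)) : wm 1 G = chi G := by
  unfold wm chi
  have h : ∀ X ∈ Fintype.piFinset (fun _ : Fin 1 => G),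
      (if interTuple X ∈ G then ∏ j, (-1 : ℤ) ^ ((X j).card - 1) else 0)
        = (-1 : ℤ) ^ ((X 0).card - 1) := by
    intro X hX
    rw [interTuple_one, if_pos (Fintype.mem_piFinset.1 hX 0), Fin.prod_univ_one]
  rw [Finset.sum_congr rfl h]
  refine Finset.sum_nbij' (fun X : Fin 1 → Finset α => X 0) (fun y (_ : Fin 1) => y)
    ?_ ?_ ?_ ?_ ?_
  · intro X hX; exact Fintype.mem_piFinset.1 hX 0
  · intro y hy; exact Fintype.mem_piFinset.2 (fun _ => hy)
  · intro X hX
    funext j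
    have hj : j = 0 := Subsingleton.elim j 0
    rw [hj]
  · intro y hy; rfl
  · intro X hX; rfl


/-- Higher characteristics of manifolds. -/
theorem manifold_characteristics (M : Finset (Finset ℕ)) (hM : IsComplex M) (d : ℕ)
    (hmani : ∀ x ∈ M, x.card = 1 → IsSphere ((d : ℤ) - 1) (sphereC M x)) :
    (∀ m : ℕ, 1 ≤ m → wm m M = wm 1 M) ∧
    (Odd d → ∀ m : ℕ, 1 ≤ m → wm m M = 0) := by
  have key : ∀ m : ℕ, 0 < m → wm m M = eps (d : ℤ) ^ m * chi M := by
    intro m hm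
    rw [gauss_bonnet hM hm]
    have hterm : ∀ x ∈ M, (-1 : ℤ) ^ (x.card - 1) * wm m (starC M x)
        = eps (d : ℤ) ^ m * (-1 : ℤ) ^ (x.card - 1) := by
      intro x hx
      rw [wm_starC hM hx hm]
      have hcard : x.card = (x.card - 1) + 1 := by
        have := Finset.card_pos.2 (hM.1 x hx); omega
      rw [chi_starC_manifold (x.card - 1) (d : ℤ) M hM hmani x hx hcard]
      exact mul_comm _ _
    rw [Finset.sum_congr rfl hterm, ← Finset.mul_sum]
    rfl
  have h1 : chi M = eps (d : ℤ) * chi M := by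
    have := key 1 Nat.one_pos
    rw [wm_one, pow_one] at this
    exact this
  have habs : ∀ m : ℕ, eps (d : ℤ) ^ m * chi M = chi M := by
    intro m
    induction m with
    | zero => simp
    | succ m ihm => rw [pow_succ, mul_assoc, ← h1, ihm]
  constructor
  · intro m hm
    rw [key m hm, habs, wm_one]
  · intro hodd m hm
    have heps : eps (d : ℤ) = -1 := by
      have : ¬ Even (d : ℤ) := by
        rw [Int.even_coe_nat]
        exact Nat.not_even_iff_odd.2 hodd
      simp [eps, this]
    have hchi : chi M = 0 := by
      rw [heps] at h1; linarith
    rw [key m hm, hchi, mul_zero]
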